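/- Let X be an abelian group with 2X = X, and let f, g : X → ℂ be functions that are not identically zero, each satisfying the Hermitian condition f(−x) = conj(f(x)). If f and g satisfy the Kac–Bernstein functional equation f(x+y)·g(x−y) = f(x)·f(y)·g(x)·g(−y) for all x, y ∈ X, then there exist a subgroup G of X such that the quotient X/G has no elements of order 2 (i.e. 2x ∈ G implies x ∈ G), signs ε, δ ∈ {−1, 1}, unitary characters α, β of G, a quadratic function P : G → ℝ, and a real constant r, such that f(x) = ε·α(x)·exp(P(x) + r) for x ∈ G and f(x) = 0 for x ∉ G, while g(x) = δ·β(x)·exp(P(x) − r) for x ∈ G and g(x) = 0 for x ∉ G. -/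

import Mathlib

/-!
Since `2X = X`, non-vanishing forces `f 0 * g 0 = 1`, and `f 0` is real, so after rescaling by a
real constant we may assume `f 0 = g 0 = 1`. The norms `‖f‖`, `‖g‖` solve the equation as well;
putting `y = x` and `y = -x` gives `‖f (2x)‖ = ‖g (2x)‖`, hence `‖f‖ = ‖g‖ =: n` with
`n (x + y) * n (x - y) = n x ^ 2 * n y ^ 2`. So the support `G` of `n` is a subgroup closed under
halving and `log n` is quadratic on `G`. The phases `α`, `β` of `f`, `g` on `G` solve the equation
in the circle group, where `α (-x) = (α x)⁻¹`; from it `α (2x) = α x ^ 2` and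
`α (x + y) ^ 2 = α x ^ 2 * α y ^ 2` (likewise for `β`), which on the 2-divisible group `G` make
`α` and `β` characters.
-/

open ComplexConjugate

def IsKacBernstein {X M : Type*} [AddGroup X] [Mul M] (f g : X → M) : Prop :=
  ∀ x y, f (x + y) * g (x - y) = f x * f y * g x * g (-y)

def IsQuadratic {G : Type*} [AddGroup G] (P : G → ℝ) : Prop :=
  ∀ x y, P (x + y) + P (x - y) = 2 * (P x + P y)

theorem map_add_of_map_two_nsmul {G M : Type*} [AddCommMonoid G] [CommMonoid M]
    (h2 : ∀ x : G, ∃ y, 2 • y = x) {φ : G → M} (hφ2 : ∀ x, φ (2 • x) = φ x ^ 2)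
    (hφ : ∀ x y, φ (x + y) ^ 2 = φ x ^ 2 * φ y ^ 2) (u v : G) : φ (u + v) = φ u * φ v := by
  obtain ⟨x, rfl⟩ := h2 u
  obtain ⟨y, rfl⟩ := h2 v
  rw [← smul_add, hφ2, hφ, hφ2, hφ2]

theorem AddSubgroup.exists_two_nsmul_eq {X : Type*} [AddGroup X] {G : AddSubgroup X}
    (h2 : ∀ x : X, ∃ y, 2 • y = x) (hG : ∀ x, 2 • x ∈ G → x ∈ G) (x : G) :
    ∃ y : G, 2 • y = x := by
  obtain ⟨y, hy⟩ := h2 x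
  exact ⟨⟨y, hG y (hy ▸ x.2)⟩, Subtype.ext hy⟩

theorem Real.exists_eq_sign_mul_exp {c : ℝ} (hc : c ≠ 0) :
    ∃ ε r : ℝ, (ε = 1 ∨ ε = -1) ∧ c = ε * Real.exp r := by
  refine ⟨SignType.sign c, Real.log |c|, ?_, by rw [Real.exp_log (abs_pos.2 hc), sign_mul_abs]⟩
  rcases hc.lt_or_gt with hc | hc <;> simp [hc]

theorem Circle.exp_arg_conj (z : ℂ) : Circle.exp (conj z).arg = (Circle.exp z.arg)⁻¹ := by
  rw [Complex.arg_conj]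
  split_ifs with hz
  · ext; simp [hz, Circle.coe_exp, Complex.exp_pi_mul_I]
  · exact Circle.exp_neg _

namespace IsKacBernstein

section Basic

variable {X Y M : Type*} [AddGroup X] {f g : X → M}

theorem comp [Mul M] [AddGroup Y] (h : IsKacBernstein f g) (φ : Y →+ X) :
    IsKacBernstein (f ∘ φ) (g ∘ φ) := fun x y => by
  simpa [map_add, map_sub, map_neg] using h (φ x) (φ y)

theorem const_mul [CommMonoid M] (h : IsKacBernstein f g) {a b : M} (hab : a * b = 1) :
    IsKacBernstein (fun x => a * f x) (fun x => b * g x) := fun x y => by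
  calc a * f (x + y) * (b * g (x - y)) = (a * b) * (f (x + y) * g (x - y)) := by ac_rfl
    _ = (a * b) * (a * b) * (f x * f y * g x * g (-y)) := by rw [h, hab]; simp only [one_mul]
    _ = a * f x * (a * f y) * (b * g x) * (b * g (-y)) := by ac_rfl

theorem norm [SeminormedRing M] [NormMulClass M] (h : IsKacBernstein f g) :
    IsKacBernstein (‖f ·‖) (‖g ·‖) := fun x y => by
  simpa only [norm_mul] using congrArg (‖·‖) (h x y)

theorem left_eq_right [MulOneClass M] (h : IsKacBernstein f g) (h2 : ∀ x : X, ∃ y, 2 • y = x)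
    (hf0 : f 0 = 1) (hg0 : g 0 = 1) (hf : ∀ x, f (-x) = f x) (hg : ∀ x, g (-x) = g x) :
    f = g := by
  funext z
  obtain ⟨x, rfl⟩ := h2 z
  have hfx := h x x
  have hgx := h x (-x)
  rw [sub_self, hg0, mul_one, hg] at hfx
  rw [add_neg_cancel, sub_neg_eq_add, hf0, one_mul, hf, neg_neg] at hgx
  rw [two_nsmul, hfx, hgx]

end Basic

theorem apply_zero_mul_apply_zero {X R : Type*} [AddCommGroup X] [CommRing R] [NoZeroDivisors R]
    {f g : X → R} (h : IsKacBernstein f g) (h2 : ∀ x : X, ∃ y, 2 • y = x)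
    (hf : ∃ x, f x ≠ 0) (hg : ∃ x, g x ≠ 0) : f 0 * g 0 = 1 := by
  have h00 := h 0 0
  simp only [add_zero, sub_zero, neg_zero] at h00
  have hidem : f 0 * g 0 * (f 0 * g 0 - 1) = 0 := by linear_combination -h00
  refine sub_eq_zero.1 ((mul_eq_zero.1 hidem).resolve_left fun h0 => ?_)
  have hdiag : ∀ x, f x * g x = 0 := fun x => by
    have hx0 := h x 0
    simp only [add_zero, sub_zero, neg_zero] at hx0
    linear_combination hx0 + f x * g x * h0
  obtain ⟨u, hu⟩ := hf
  obtain ⟨v, hv⟩ := hg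
  obtain ⟨w, hw⟩ := h2 (u + v)
  have huv := h w (u - w)
  rw [add_sub_cancel, sub_sub_eq_add_sub, ← two_nsmul, hw, add_sub_cancel_left] at huv
  exact mul_ne_zero hu hv (by rw [huv]; linear_combination f (u - w) * g (-(u - w)) * hdiag w)

theorem of_mul {X M : Type*} [AddGroup X] [CommMonoidWithZero M] [IsCancelMulZero M]
    {n a b : X → M}
    (h : IsKacBernstein (fun x => n x * a x) (fun x => n x * b x)) (hn : IsKacBernstein n n)
    (hn0 : ∀ x, n x ≠ 0) : IsKacBernstein a b := fun x y => by
  have hN : n x * n y * n x * n (-y) ≠ 0 := by simp [hn0]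
  apply mul_left_cancel₀ hN
  calc _ = n (x + y) * a (x + y) * (n (x - y) * b (x - y)) := by rw [← hn x y]; ac_rfl
    _ = _ := by rw [h x y]; dsimp only; ac_rfl

theorem isQuadratic_log {X : Type*} [AddGroup X] {n : X → ℝ} (h : IsKacBernstein n n)
    (hpos : ∀ x, 0 < n x) (hn : ∀ x, n (-x) = n x) : IsQuadratic fun x => Real.log (n x) :=
  fun x y => by
  have hlog := congrArg Real.log (h x y)
  simp only [Real.log_mul, (hpos _).ne', mul_ne_zero_iff, ne_eq, not_false_eq_true, and_self,
    hn] at hlog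
  linarith

section Support

variable {X M : Type*} [AddGroup X] [MulZeroClass M] [NoZeroDivisors M] {n : X → M}

def supportAddSubgroup (h : IsKacBernstein n n) (h0 : n 0 ≠ 0) (hn : ∀ x, n (-x) = n x) :
    AddSubgroup X where
  carrier := Function.support n
  zero_mem' := h0
  add_mem' {x y} (hx : n x ≠ 0) (hy : n y ≠ 0) := left_ne_zero_of_mul <| h x y ▸
    mul_ne_zero (mul_ne_zero (mul_ne_zero hx hy) hx) ((hn y).symm ▸ hy)
  neg_mem' {x} hx := by simpa [Function.mem_support, hn] using hx

variable {h : IsKacBernstein n n} {h0 : n 0 ≠ 0} {hn : ∀ x, n (-x) = n x}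

@[simp]
theorem mem_supportAddSubgroup {x : X} : x ∈ h.supportAddSubgroup h0 hn ↔ n x ≠ 0 := Iff.rfl

theorem mem_supportAddSubgroup_of_two_nsmul_mem {x : X}
    (hx : 2 • x ∈ h.supportAddSubgroup h0 hn) : x ∈ h.supportAddSubgroup h0 hn := by
  intro hx0
  have hxx := h x x
  simp only [hx0, mul_zero, zero_mul, sub_self] at hxx
  exact hx (by rw [two_nsmul]; exact (mul_eq_zero.1 hxx).resolve_right h0)

end Support

section CommGroup

variable {G M : Type*} [AddCommGroup G] [CommGroup M] {α β : G → M}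

theorem right_apply_zero (h : IsKacBernstein α β) (hα0 : α 0 = 1) : β 0 = 1 := by
  simpa [hα0] using h 0 0

theorem left_apply_two_nsmul (h : IsKacBernstein α β) (hα0 : α 0 = 1)
    (hβ : ∀ x, β (-x) = (β x)⁻¹) (x : G) : α (2 • x) = α x ^ 2 := by
  simpa [two_nsmul, h.right_apply_zero hα0, hβ, pow_two] using h x x

theorem right_apply_two_nsmul (h : IsKacBernstein α β) (hα0 : α 0 = 1)
    (hα : ∀ x, α (-x) = (α x)⁻¹) (x : G) : β (2 • x) = β x ^ 2 := by
  simpa [two_nsmul, hα0, hα, pow_two] using h x (-x)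

theorem left_apply_add_sq (h : IsKacBernstein α β) (hβ : ∀ x, β (-x) = (β x)⁻¹) (x y : G) :
    α (x + y) ^ 2 = α x ^ 2 * α y ^ 2 := by
  have hxy := h x y
  have hyx := h y x
  rw [add_comm y x, ← neg_sub x y, hβ, hβ] at hyx
  rw [hβ] at hxy
  calc α (x + y) ^ 2 = (α (x + y) * β (x - y)) * (α (x + y) * (β (x - y))⁻¹) := by
        rw [mul_mul_mul_comm, mul_inv_cancel, mul_one, pow_two]
    _ = α x ^ 2 * α y ^ 2 := by
        rw [hxy, hyx]
        apply Additive.ofMul.injective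
        simp only [ofMul_mul, ofMul_pow, ofMul_inv]
        abel

theorem right_apply_add_sq (h : IsKacBernstein α β) (hα : ∀ x, α (-x) = (α x)⁻¹)
    (hβ : ∀ x, β (-x) = (β x)⁻¹) (x y : G) :
    β (x + y) ^ 2 = β x ^ 2 * β y ^ 2 := by
  have hxy := h x (-y)
  have hyx := h (-y) x
  rw [sub_neg_eq_add] at hxy
  rw [show -y + x = x - y by abel, show -y - x = -(x + y) by abel, hα, hβ, hβ, hβ] at hyx
  rw [← sub_eq_add_neg, hα, neg_neg] at hxy
  calc β (x + y) ^ 2 = (α (x - y) * β (x + y)) * (α (x - y) * (β (x + y))⁻¹)⁻¹ := by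
        rw [mul_inv_rev, inv_inv, mul_comm (β _), mul_mul_mul_comm, mul_inv_cancel, one_mul,
          pow_two]
    _ = β x ^ 2 * β y ^ 2 := by
        rw [hxy, hyx]
        apply Additive.ofMul.injective
        simp only [ofMul_mul, ofMul_pow, ofMul_inv]
        abel

theorem map_add_left (h : IsKacBernstein α β) (h2 : ∀ x : G, ∃ y, 2 • y = x) (hα0 : α 0 = 1)
    (hβ : ∀ x, β (-x) = (β x)⁻¹) (x y : G) :
    α (x + y) = α x * α y :=
  map_add_of_map_two_nsmul h2 (h.left_apply_two_nsmul hα0 hβ) (h.left_apply_add_sq hβ) x y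

theorem map_add_right (h : IsKacBernstein α β) (h2 : ∀ x : G, ∃ y, 2 • y = x) (hα0 : α 0 = 1)
    (hα : ∀ x, α (-x) = (α x)⁻¹) (hβ : ∀ x, β (-x) = (β x)⁻¹) (x y : G) :
    β (x + y) = β x * β y :=
  map_add_of_map_two_nsmul h2 (h.right_apply_two_nsmul hα0 hα) (h.right_apply_add_sq hα hβ) x y

end CommGroup

end IsKacBernstein

theorem IsKacBernstein.circleExp_arg {X : Type*} [AddGroup X] {f g : X → ℂ}
    (h : IsKacBernstein f g) (hfg : ∀ x, ‖f x‖ = ‖g x‖) (hf0 : ∀ x, f x ≠ 0) :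
    IsKacBernstein (fun x => Circle.exp (f x).arg) (fun x => Circle.exp (g x).arg) := by
  have hpolar (u : ℂ) : ‖u‖ * (Circle.exp u.arg : ℂ) = u := by
    rw [Circle.coe_exp, Complex.norm_mul_exp_arg_mul_I]
  have hn : IsKacBernstein (fun x => (‖f x‖ : ℂ)) (fun x => (‖f x‖ : ℂ)) := fun x y => by
    have := h.norm x y
    simp only [← hfg] at this
    dsimp only
    exact_mod_cast this
  have hf : (fun x => (‖f x‖ : ℂ) * Circle.exp (f x).arg) = f := funext fun x => hpolar _
  have hg : (fun x => (‖f x‖ : ℂ) * Circle.exp (g x).arg) = g :=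
    funext fun x => by rw [hfg, hpolar]
  rw [← hf, ← hg] at h
  exact fun x y => Circle.coe_injective <| by
    simpa using h.of_mul hn (by simpa using hf0) x y

theorem IsKacBernstein.exists_addChar_of_apply_zero_eq_one {X : Type*} [AddCommGroup X]
    {f g : X → ℂ} (h : IsKacBernstein f g) (h2 : ∀ x : X, ∃ y, 2 • y = x) (hf0 : f 0 = 1)
    (hg0 : g 0 = 1) (hf : ∀ x, f (-x) = conj (f x)) (hg : ∀ x, g (-x) = conj (g x)) :
    ∃ (G : AddSubgroup X) (α β : AddChar G Circle) (P : G → ℝ),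
      (∀ x, 2 • x ∈ G → x ∈ G) ∧ IsQuadratic P ∧
      (∀ x : G, f x = Real.exp (P x) * α x ∧ g x = Real.exp (P x) * β x) ∧
      ∀ x ∉ G, f x = 0 ∧ g x = 0 := by
  have hfn (x : X) : ‖f (-x)‖ = ‖f x‖ := by simp [hf]
  have hfg : (‖f ·‖) = (‖g ·‖) :=
    h.norm.left_eq_right h2 (by simp [hf0]) (by simp [hg0]) hfn (fun x => by simp [hg])
  have hfg' (x : X) : ‖f x‖ = ‖g x‖ := congrFun hfg x
  have hn : IsKacBernstein (‖f ·‖) (‖f ·‖) := by nth_rw 2 [hfg]; exact h.norm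
  set G := hn.supportAddSubgroup (by simp [hf0]) hfn
  have hG (x : X) : 2 • x ∈ G → x ∈ G := hn.mem_supportAddSubgroup_of_two_nsmul_mem
  have hfG (x : G) : f x ≠ 0 := norm_ne_zero_iff.1 x.2
  have hαβ := (h.comp G.subtype).circleExp_arg (fun x => hfg' x) hfG
  have hinv {u : X → ℂ} (hu : ∀ x, u (-x) = conj (u x)) (x : G) :
      Circle.exp (u (-x)).arg = (Circle.exp (u x).arg)⁻¹ := by
    rw [hu, Circle.exp_arg_conj]
  have hα0 : Circle.exp (f (0 : G)).arg = 1 := by simp [hf0]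
  have hpolar (u : ℂ) (hu : u ≠ 0) : u = Real.exp (Real.log ‖u‖) * Circle.exp u.arg := by
    rw [Real.exp_log (norm_pos_iff.2 hu), Circle.coe_exp, Complex.norm_mul_exp_arg_mul_I]
  refine ⟨G, ⟨fun x => Circle.exp (f x).arg, hα0,
      hαβ.map_add_left (G.exists_two_nsmul_eq h2 hG) hα0 (hinv hg)⟩,
    ⟨fun x => Circle.exp (g x).arg, hαβ.right_apply_zero hα0,
      hαβ.map_add_right (G.exists_two_nsmul_eq h2 hG) hα0 (hinv hf) (hinv hg)⟩,
    fun x => Real.log ‖f x‖, hG,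
    (hn.comp G.subtype).isQuadratic_log (fun x => norm_pos_iff.2 (hfG x)) (fun x => hfn x),
    fun x => ⟨hpolar _ (hfG x), ?_⟩, fun x hx => ⟨?_, ?_⟩⟩
  · show g x = Real.exp (Real.log ‖f x‖) * Circle.exp (g x).arg
    rw [hfg']
    exact hpolar _ (norm_ne_zero_iff.1 (hfg' x ▸ x.2))
  · exact norm_eq_zero.1 (not_not.1 hx)
  · exact norm_eq_zero.1 (hfg' x ▸ not_not.1 hx)

theorem kac_bernstein_hermitian_not_vanishing {X : Type*} [AddCommGroup X]
    (h2 : ∀ x : X, ∃ y : X, 2 • y = x)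
    (f g : X → ℂ)
    (hfne : ∃ x, f x ≠ 0) (hgne : ∃ x, g x ≠ 0)
    (hfH : ∀ x : X, f (-x) = starRingEnd ℂ (f x))
    (hgH : ∀ x : X, g (-x) = starRingEnd ℂ (g x))
    (hKB : ∀ x y : X, f (x + y) * g (x - y) = f x * f y * g x * g (-y)) :
    ∃ (G : AddSubgroup X) (ε δ : ℝ) (α β : G → ℂ) (P : G → ℝ) (r : ℝ),
      (∀ x : X, 2 • x ∈ G → x ∈ G) ∧
      (ε = 1 ∨ ε = -1) ∧ (δ = 1 ∨ δ = -1) ∧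
      (∀ x y : G, α (x + y) = α x * α y) ∧ (∀ x : G, ‖α x‖ = 1) ∧
      (∀ x y : G, β (x + y) = β x * β y) ∧ (∀ x : G, ‖β x‖ = 1) ∧
      (∀ x y : G, P (x + y) + P (x - y) = 2 * (P x + P y)) ∧
      (∀ (x : X) (hx : x ∈ G),
          f x = (ε : ℂ) * α ⟨x, hx⟩ * Complex.exp ((P ⟨x, hx⟩ + r : ℝ) : ℂ)) ∧
      (∀ x : X, x ∉ G → f x = 0) ∧
      (∀ (x : X) (hx : x ∈ G),
          g x = (δ : ℂ) * β ⟨x, hx⟩ * Complex.exp ((P ⟨x, hx⟩ - r : ℝ) : ℂ)) ∧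
      (∀ x : X, x ∉ G → g x = 0) := by
  have hfg0 : f 0 * g 0 = 1 := IsKacBernstein.apply_zero_mul_apply_zero hKB h2 hfne hgne
  obtain ⟨c, hc⟩ : ∃ c : ℝ, f 0 = c := Complex.conj_eq_iff_real.1 (by simpa using (hfH 0).symm)
  have hc0 : (c : ℂ) ≠ 0 := hc ▸ left_ne_zero_of_mul_eq_one hfg0
  have hg0 : g 0 = (c : ℂ)⁻¹ := eq_inv_of_mul_eq_one_right (hc ▸ hfg0)
  obtain ⟨G, α, β, P, hG, hP, hfgG, hfgG'⟩ :=
    IsKacBernstein.exists_addChar_of_apply_zero_eq_one (f := fun x => (c : ℂ)⁻¹ * f x)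
      (g := fun x => (c : ℂ) * g x) (IsKacBernstein.const_mul hKB (inv_mul_cancel₀ hc0)) h2
      (by simp [hc, hc0]) (by simp [hg0, hc0]) (fun x => by simp [hfH]) (fun x => by simp [hgH])
  obtain ⟨ε, r, hε, rfl⟩ := Real.exists_eq_sign_mul_exp (c := c) (by exact_mod_cast hc0)
  have hε' : ε⁻¹ = ε := by rcases hε with rfl | rfl <;> norm_num
  refine ⟨G, ε, ε, (α ·), (β ·), P, r, hG, hε, hε, fun x y => by simp [AddChar.map_add_eq_mul],
    fun x => Circle.norm_coe _, fun x y => by simp [AddChar.map_add_eq_mul],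
    fun x => Circle.norm_coe _, hP, fun x hx => ?_, fun x hx => ?_, fun x hx => ?_,
    fun x hx => ?_⟩
  · rw [(inv_mul_eq_iff_eq_mul₀ hc0).1 (hfgG ⟨x, hx⟩).1]
    push_cast
    rw [Complex.exp_add]
    ring
  · exact (mul_eq_zero.1 (hfgG' x hx).1).resolve_left (inv_ne_zero hc0)
  · rw [(eq_inv_mul_iff_mul_eq₀ hc0).2 (hfgG ⟨x, hx⟩).2]
    push_cast
    rw [Complex.exp_sub, mul_inv, ← Complex.ofReal_inv, hε']
    field_simp
  · exact (mul_eq_zero.1 (hfgG' x hx).2).resolve_left hc0
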